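/- If every task j satisfies max(p̄_j, p_j) <= C*, where C* is the optimal makespan, then HeteroPrio achieves makespan at most 2·C*: the first idle time t_FI satisfies t_FI <= AreaBound <= C*, and after t_FI each processor executes at most one further task of length at most max_j min over its assigned resource's processing time <= C*. -/
import Mathlib

open MeasureTheory

lemma cover_bound {ι : Type} (s : Finset ι) (st fi : ι → ℝ) (T : ℝ)
    (hpos : ∀ j ∈ s, 0 ≤ fi j - st j)
    (hd : (s : Set ι).PairwiseDisjoint fun j => Set.Ico (st j) (fi j))
    (hcov : Set.Ico (0:ℝ) T ⊆ ⋃ j ∈ s, Set.Ico (st j) (fi j)) :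
    T ≤ ∑ j ∈ s, (fi j - st j) := by
  rcases le_or_gt T 0 with h | h
  · exact h.trans (Finset.sum_nonneg hpos)
  have h1 : volume (Set.Ico (0:ℝ) T) ≤ volume (⋃ j ∈ s, Set.Ico (st j) (fi j)) :=
    measure_mono hcov
  rw [measure_biUnion_finset hd (fun j _ => measurableSet_Ico)] at h1
  simp only [Real.volume_Ico, sub_zero] at h1
  rw [← ENNReal.ofReal_sum_of_nonneg hpos] at h1
  exact (ENNReal.ofReal_le_ofReal_iff (Finset.sum_nonneg hpos)).mp h1

lemma pack_bound {ι : Type} (s : Finset ι) (st fi : ι → ℝ) (C : ℝ) (hC : 0 ≤ C)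
    (hpos : ∀ j ∈ s, 0 ≤ fi j - st j)
    (hd : (s : Set ι).PairwiseDisjoint fun j => Set.Ico (st j) (fi j))
    (hsub : ∀ j ∈ s, Set.Ico (st j) (fi j) ⊆ Set.Ico (0:ℝ) C) :
    ∑ j ∈ s, (fi j - st j) ≤ C := by
  have h1 : volume (⋃ j ∈ s, Set.Ico (st j) (fi j)) ≤ volume (Set.Ico (0:ℝ) C) :=
    measure_mono (Set.iUnion₂_subset hsub)
  rw [measure_biUnion_finset hd (fun j _ => measurableSet_Ico)] at h1
  simp only [Real.volume_Ico, sub_zero] at h1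
  rw [← ENNReal.ofReal_sum_of_nonneg hpos] at h1
  exact (ENNReal.ofReal_le_ofReal_iff hC).mp h1



/-- A non-preemptive schedule of tasks (indexed by `ι`) on a heterogeneous
platform with `m` CPUs and `k` GPUs; task `j` takes time `pc j` on a CPU and
`pg j` on a GPU. `cpu j = true` means `j` runs on CPU number `proc j`. -/
structure Sched (ι : Type) (m k : ℕ) (pc pg : ι → ℝ) where
  cpu : ι → Bool
  proc : ι → ℕ
  hproc : ∀ j, proc j < if cpu j then m else k
  start : ι → ℝ
  hstart : ∀ j, 0 ≤ start j
  disj : ∀ i j : ι, i ≠ j → cpu i = cpu j → proc i = proc j →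
    start i + (if cpu i then pc i else pg i) ≤ start j ∨
    start j + (if cpu j then pc j else pg j) ≤ start i

/-- Processing time of task `j` on its assigned resource type. -/
def Sched.ptime {ι : Type} {m k : ℕ} {pc pg : ι → ℝ} (S : Sched ι m k pc pg)
    (j : ι) : ℝ :=
  if S.cpu j then pc j else pg j

/-- Completion time of task `j`. -/
def Sched.finish {ι : Type} {m k : ℕ} {pc pg : ι → ℝ} (S : Sched ι m k pc pg)
    (j : ι) : ℝ :=
  S.start j + S.ptime j

/-- Processor `q` of type `b` (`true` = CPU) is busy at time `t`. -/
def Sched.busyAt {ι : Type} {m k : ℕ} {pc pg : ι → ℝ} (S : Sched ι m k pc pg)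
    (b : Bool) (q : ℕ) (t : ℝ) : Prop :=
  ∃ j, S.cpu j = b ∧ S.proc j = q ∧ S.start j ≤ t ∧ t < S.finish j

/-- Makespan: maximum completion time. -/
noncomputable def Sched.makespan {ι : Type} [Fintype ι] {m k : ℕ} {pc pg : ι → ℝ}
    (hne : Nonempty ι) (S : Sched ι m k pc pg) : ℝ :=
  Finset.univ.sup' (Finset.univ_nonempty_iff.mpr hne) S.finish

/-- List schedule: no processor (of either type) is idle while an
unstarted task remains. -/
def Sched.isList {ι : Type} {m k : ℕ} {pc pg : ι → ℝ}
    (S : Sched ι m k pc pg) : Prop :=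
  ∀ t : ℝ, 0 ≤ t →
    (∃ (b : Bool) (q : ℕ), q < (if b then m else k) ∧ ¬ S.busyAt b q t) →
    ∀ j, S.start j ≤ t

/-- Tasks on the same processor have pairwise disjoint execution intervals. -/
lemma Sched.pairwiseDisjoint_proc {ι : Type} {m k : ℕ} {pc pg : ι → ℝ}
    (S : Sched ι m k pc pg) (b : Bool) (q : ℕ) [Fintype ι] [DecidableEq ι] :
    ((Finset.univ.filter (fun j => S.cpu j = b ∧ S.proc j = q) : Finset ι) : Set ι).PairwiseDisjoint
      fun j => Set.Ico (S.start j) (S.finish j) := by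
  intro i hi j hj hij
  simp only [Finset.coe_filter, Set.mem_setOf_eq, Finset.mem_univ, true_and] at hi hj
  have hc : S.cpu i = S.cpu j := hi.1.trans hj.1.symm
  have hp : S.proc i = S.proc j := hi.2.trans hj.2.symm
  rcases S.disj i j hij hc hp with h | h
  · have h' : S.finish i ≤ S.start j := h
    exact Set.Ico_disjoint_Ico.mpr
      (le_trans (min_le_left _ _) (h'.trans (le_max_right _ _)))
  · have h' : S.finish j ≤ S.start i := h
    exact Set.Ico_disjoint_Ico.mpr
      (le_trans (min_le_right _ _) (h'.trans (le_max_left _ _)))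

/-- if every task `j` satisfies `max(pc j, pg j) ≤ Copt`, where
`Copt` is the optimal makespan, then any HeteroPrio schedule (a list schedule
whose CPU-assigned tasks have acceleration factors at most those of the
GPU-assigned tasks) has makespan at most `2·Copt`. -/
theorem heteroPrio_two_approx_small_tasks
    (n m k : ℕ) (hn : 0 < n) (hm : 0 < m) (hk : 0 < k)
    (pc pg : Fin n → ℝ) (hpc : ∀ j, 0 < pc j) (hpg : ∀ j, 0 < pg j)
    (S : Sched (Fin n) m k pc pg)
    (halpha : ∀ i j, S.cpu i = true → S.cpu j = false →
      pc i * pg j ≤ pc j * pg i)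
    (hlist : S.isList)
    (Copt : ℝ)
    (hfeas : ∃ S' : Sched (Fin n) m k pc pg,
      Sched.makespan ⟨⟨0, hn⟩⟩ S' = Copt)
    (hopt : ∀ S' : Sched (Fin n) m k pc pg,
      Copt ≤ Sched.makespan ⟨⟨0, hn⟩⟩ S')
    (hmax : ∀ j, max (pc j) (pg j) ≤ Copt) :
    Sched.makespan ⟨⟨0, hn⟩⟩ S ≤ 2 * Copt := by
  classical
  obtain ⟨S', hS'⟩ := hfeas
  have hne : (Finset.univ : Finset (Fin n)).Nonempty :=
    Finset.univ_nonempty_iff.mpr ⟨⟨0, hn⟩⟩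
  have hptpos : ∀ (W : Sched (Fin n) m k pc pg) j, 0 < W.ptime j := by
    intro W j; unfold Sched.ptime; split
    · exact hpc j
    · exact hpg j
  have hptC : ∀ j, S.ptime j ≤ Copt := by
    intro j; unfold Sched.ptime; split
    · exact (le_max_left _ _).trans (hmax j)
    · exact (le_max_right _ _).trans (hmax j)
  -- finishing times in S' are at most Copt
  have hfin' : ∀ j, S'.finish j ≤ Copt := by
    intro j
    rw [← hS']
    exact Finset.le_sup' S'.finish (Finset.mem_univ j)
  have hCopt : 0 ≤ Copt := by
    have := hfin' ⟨0, hn⟩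
    have h1 := S'.hstart ⟨0, hn⟩
    have h2 := hptpos S' ⟨0, hn⟩
    unfold Sched.finish at this
    linarith
  set T := Finset.univ.sup' hne S.start with hTdef
  have hT : T ≤ Copt := by
    by_contra hcon
    push_neg at hcon
    obtain ⟨j0, -, hj0⟩ := Finset.exists_mem_eq_sup' hne S.start
    -- every processor busy before T
    have hbusy : ∀ t : ℝ, 0 ≤ t → t < T → ∀ (b : Bool) (q : ℕ),
        q < (if b then m else k) → S.busyAt b q t := by
      intro t ht htT b q hq
      by_contra hnb
      have := hlist t ht ⟨b, q, hq, hnb⟩ j0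
      rw [← hj0] at this
      linarith
    -- per-processor lower bound in S
    have hproc_lb : ∀ (b : Bool) (q : ℕ), q < (if b then m else k) →
        T ≤ ∑ j ∈ Finset.univ.filter (fun j => S.cpu j = b ∧ S.proc j = q),
          S.ptime j := by
      intro b q hq
      have hcov : Set.Ico (0:ℝ) T ⊆
          ⋃ j ∈ Finset.univ.filter (fun j => S.cpu j = b ∧ S.proc j = q),
            Set.Ico (S.start j) (S.finish j) := by
        intro t ht
        obtain ⟨j, hjc, hjp, hjs, hjf⟩ := hbusy t ht.1 ht.2 b q hq
        exact Set.mem_biUnion (Finset.mem_filter.mpr ⟨Finset.mem_univ j, hjc, hjp⟩)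
          ⟨hjs, hjf⟩
      have := cover_bound _ S.start S.finish T
        (fun j _ => by have := hptpos S j; unfold Sched.finish; linarith)
        (S.pairwiseDisjoint_proc b q) hcov
      calc T ≤ _ := this
        _ = _ := Finset.sum_congr rfl (fun j _ => by unfold Sched.finish; ring)
    -- per-processor upper bound in S'
    have hproc_ub : ∀ (b : Bool) (q : ℕ),
        (∑ j ∈ Finset.univ.filter (fun j => S'.cpu j = b ∧ S'.proc j = q),
          S'.ptime j) ≤ Copt := by
      intro b q
      have := pack_bound (Finset.univ.filter (fun j => S'.cpu j = b ∧ S'.proc j = q))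
        S'.start S'.finish Copt hCopt
        (fun j _ => by have := hptpos S' j; unfold Sched.finish; linarith)
        (S'.pairwiseDisjoint_proc b q)
        (fun j _ => Set.Ico_subset_Ico (S'.hstart j) (hfin' j))
      calc (∑ j ∈ _, S'.ptime j)
          = _ := Finset.sum_congr rfl (fun j _ => by unfold Sched.finish; ring)
        _ ≤ Copt := this
    -- aggregate over CPUs of S
    have hAc : (m : ℝ) * T ≤ ∑ j ∈ Finset.univ.filter (fun j => S.cpu j = true), pc j := by
      have hfib : ∑ q ∈ Finset.range m,
          ∑ j ∈ (Finset.univ.filter (fun j => S.cpu j = true)).filter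
            (fun j => S.proc j = q), S.ptime j
          = ∑ j ∈ Finset.univ.filter (fun j => S.cpu j = true), S.ptime j := by
        apply Finset.sum_fiberwise_of_maps_to
        intro j hj
        have hc := (Finset.mem_filter.mp hj).2
        have := S.hproc j
        rw [hc] at this
        simpa using this
      have hstep : (m : ℝ) * T ≤ ∑ q ∈ Finset.range m,
          ∑ j ∈ (Finset.univ.filter (fun j => S.cpu j = true)).filter
            (fun j => S.proc j = q), S.ptime j := by
        have : (m : ℝ) * T = ∑ _q ∈ Finset.range m, T := by
          simp [Finset.sum_const, mul_comm]
        rw [this]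
        apply Finset.sum_le_sum
        intro q hq
        have hq' : q < m := Finset.mem_range.mp hq
        have := hproc_lb true q (by simpa using hq')
        calc T ≤ _ := this
          _ = _ := by rw [Finset.filter_filter]
      have heq : ∑ j ∈ Finset.univ.filter (fun j => S.cpu j = true), S.ptime j
          = ∑ j ∈ Finset.univ.filter (fun j => S.cpu j = true), pc j := by
        apply Finset.sum_congr rfl
        intro j hj
        have := (Finset.mem_filter.mp hj).2
        unfold Sched.ptime
        rw [this]; simp
      linarith [hstep.trans_eq (hfib.trans heq)]
    have hAg : (k : ℝ) * T ≤ ∑ j ∈ Finset.univ.filter (fun j => S.cpu j = false), pg j := by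
      have hfib : ∑ q ∈ Finset.range k,
          ∑ j ∈ (Finset.univ.filter (fun j => S.cpu j = false)).filter
            (fun j => S.proc j = q), S.ptime j
          = ∑ j ∈ Finset.univ.filter (fun j => S.cpu j = false), S.ptime j := by
        apply Finset.sum_fiberwise_of_maps_to
        intro j hj
        have hc := (Finset.mem_filter.mp hj).2
        have := S.hproc j
        rw [hc] at this
        simpa using this
      have hstep : (k : ℝ) * T ≤ ∑ q ∈ Finset.range k,
          ∑ j ∈ (Finset.univ.filter (fun j => S.cpu j = false)).filter
            (fun j => S.proc j = q), S.ptime j := by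
        have : (k : ℝ) * T = ∑ _q ∈ Finset.range k, T := by
          simp [Finset.sum_const, mul_comm]
        rw [this]
        apply Finset.sum_le_sum
        intro q hq
        have hq' : q < k := Finset.mem_range.mp hq
        have := hproc_lb false q (by simpa using hq')
        calc T ≤ _ := this
          _ = _ := by rw [Finset.filter_filter]
      have heq : ∑ j ∈ Finset.univ.filter (fun j => S.cpu j = false), S.ptime j
          = ∑ j ∈ Finset.univ.filter (fun j => S.cpu j = false), pg j := by
        apply Finset.sum_congr rfl
        intro j hj
        have := (Finset.mem_filter.mp hj).2
        unfold Sched.ptime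
        rw [this]; simp
      linarith [hstep.trans_eq (hfib.trans heq)]
    -- aggregate upper bounds for S'
    have hXc : ∑ j ∈ Finset.univ.filter (fun j => S'.cpu j = true), pc j ≤ (m : ℝ) * Copt := by
      have hfib : ∑ q ∈ Finset.range m,
          ∑ j ∈ (Finset.univ.filter (fun j => S'.cpu j = true)).filter
            (fun j => S'.proc j = q), S'.ptime j
          = ∑ j ∈ Finset.univ.filter (fun j => S'.cpu j = true), S'.ptime j := by
        apply Finset.sum_fiberwise_of_maps_to
        intro j hj
        have hc := (Finset.mem_filter.mp hj).2
        have := S'.hproc j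
        rw [hc] at this
        simpa using this
      have hstep : ∑ q ∈ Finset.range m,
          ∑ j ∈ (Finset.univ.filter (fun j => S'.cpu j = true)).filter
            (fun j => S'.proc j = q), S'.ptime j ≤ (m : ℝ) * Copt := by
        have hmc : (m : ℝ) * Copt = ∑ _q ∈ Finset.range m, Copt := by
          simp [Finset.sum_const, mul_comm]
        rw [hmc]
        apply Finset.sum_le_sum
        intro q _
        have := hproc_ub true q
        calc _ = _ := by rw [Finset.filter_filter]
          _ ≤ Copt := this
      have heq : ∑ j ∈ Finset.univ.filter (fun j => S'.cpu j = true), S'.ptime j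
          = ∑ j ∈ Finset.univ.filter (fun j => S'.cpu j = true), pc j := by
        apply Finset.sum_congr rfl
        intro j hj
        have := (Finset.mem_filter.mp hj).2
        unfold Sched.ptime
        rw [this]; simp
      linarith [hfib.symm.trans_le hstep, heq]
    have hXg : ∑ j ∈ Finset.univ.filter (fun j => S'.cpu j = false), pg j ≤ (k : ℝ) * Copt := by
      have hfib : ∑ q ∈ Finset.range k,
          ∑ j ∈ (Finset.univ.filter (fun j => S'.cpu j = false)).filter
            (fun j => S'.proc j = q), S'.ptime j
          = ∑ j ∈ Finset.univ.filter (fun j => S'.cpu j = false), S'.ptime j := by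
        apply Finset.sum_fiberwise_of_maps_to
        intro j hj
        have hc := (Finset.mem_filter.mp hj).2
        have := S'.hproc j
        rw [hc] at this
        simpa using this
      have hstep : ∑ q ∈ Finset.range k,
          ∑ j ∈ (Finset.univ.filter (fun j => S'.cpu j = false)).filter
            (fun j => S'.proc j = q), S'.ptime j ≤ (k : ℝ) * Copt := by
        have hkc : (k : ℝ) * Copt = ∑ _q ∈ Finset.range k, Copt := by
          simp [Finset.sum_const, mul_comm]
        rw [hkc]
        apply Finset.sum_le_sum
        intro q _
        have := hproc_ub false q
        calc _ = _ := by rw [Finset.filter_filter]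
          _ ≤ Copt := this
      have heq : ∑ j ∈ Finset.univ.filter (fun j => S'.cpu j = false), S'.ptime j
          = ∑ j ∈ Finset.univ.filter (fun j => S'.cpu j = false), pg j := by
        apply Finset.sum_congr rfl
        intro j hj
        have := (Finset.mem_filter.mp hj).2
        unfold Sched.ptime
        rw [this]; simp
      linarith [hfib.symm.trans_le hstep, heq]
    -- exchange argument
    set A := Finset.univ.filter (fun j => S.cpu j = true ∧ S'.cpu j = false) with hAdef
    set B := Finset.univ.filter (fun j => S.cpu j = false ∧ S'.cpu j = true) with hBdef
    have splitC : ∑ j ∈ Finset.univ.filter (fun j => S.cpu j = true), pc j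
        - ∑ j ∈ Finset.univ.filter (fun j => S'.cpu j = true), pc j
        = ∑ j ∈ A, pc j - ∑ j ∈ B, pc j := by
      rw [Finset.sum_filter, Finset.sum_filter, Finset.sum_filter, Finset.sum_filter,
        ← Finset.sum_sub_distrib, ← Finset.sum_sub_distrib]
      apply Finset.sum_congr rfl
      intro j _
      cases h1 : S.cpu j <;> cases h2 : S'.cpu j <;> simp [h1, h2]
    have splitG : ∑ j ∈ Finset.univ.filter (fun j => S.cpu j = false), pg j
        - ∑ j ∈ Finset.univ.filter (fun j => S'.cpu j = false), pg j
        = ∑ j ∈ B, pg j - ∑ j ∈ A, pg j := by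
      rw [Finset.sum_filter, Finset.sum_filter, Finset.sum_filter, Finset.sum_filter,
        ← Finset.sum_sub_distrib, ← Finset.sum_sub_distrib]
      apply Finset.sum_congr rfl
      intro j _
      cases h1 : S.cpu j <;> cases h2 : S'.cpu j <;> simp [h1, h2]
    have ha_gt : ∑ j ∈ B, pc j < ∑ j ∈ A, pc j := by
      have : (m : ℝ) * Copt < (m : ℝ) * T := by
        apply mul_lt_mul_of_pos_left hcon
        exact_mod_cast hm
      linarith
    have hd_gt : ∑ j ∈ A, pg j < ∑ j ∈ B, pg j := by
      have : (k : ℝ) * Copt < (k : ℝ) * T := by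
        apply mul_lt_mul_of_pos_left hcon
        exact_mod_cast hk
      linarith
    have hb_nn : 0 ≤ ∑ j ∈ B, pc j :=
      Finset.sum_nonneg fun j _ => (hpc j).le
    have hc_nn : 0 ≤ ∑ j ∈ A, pg j :=
      Finset.sum_nonneg fun j _ => (hpg j).le
    have hcross : (∑ j ∈ A, pc j) * (∑ j ∈ B, pg j)
        ≤ (∑ j ∈ B, pc j) * (∑ j ∈ A, pg j) := by
      rw [Finset.sum_mul_sum, Finset.sum_mul_sum]
      rw [Finset.sum_comm (s := B) (t := A)]
      apply Finset.sum_le_sum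
      intro i hi
      apply Finset.sum_le_sum
      intro j hj
      have hi' := (Finset.mem_filter.mp hi).2
      have hj' := (Finset.mem_filter.mp hj).2
      exact halpha i j hi'.1 hj'.1
    nlinarith [ha_gt, hd_gt, hb_nn, hc_nn, hcross]
  -- conclude
  apply Finset.sup'_le
  intro j _
  have h1 : S.start j ≤ T := Finset.le_sup' S.start (Finset.mem_univ j)
  have h2 := hptC j
  unfold Sched.finish
  linarith
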